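/- Let μ be a critical probability distribution on {0,2,3,...} with μ_{2N} > 0. Define, for i ∈ ℕ, the two-step transition quantities p(i,D|D) = (μ_{odd}+μ₀)·(μ̄_{2i+1} + μ̄_{2i+1}·1_{i≥1}) + 2·μ_{2N}·μ̄_{2i+2}, p(i,U|D) = (μ_{odd}+μ₀)·μ_{2i}·1_{i≥1} + μ_{2N}·μ_{2i+1}, p(i,D|U) = μ_{2Z}·(μ̄_{2i+1} + μ̄_{2i+1}·1_{i≥1}) + 2·μ_{odd}·μ̄_{2i+2}, p(i,U|U) = μ_{2Z}·μ_{2i}·1_{i≥1} + μ_{odd}·μ_{2i+1}, and set ν(i,D) = μ̄_{2i+1} + μ̄_{2i+1}·1_{i≥1} + 2·μ̄_{2i+2} and ν(i,U) = μ_{2i}·1_{i≥1} + μ_{2i+1}. Then there exists a constant a > 0 (namely a = min(μ_{2N}, μ_{odd}) if μ_{odd} > 0, and a = μ_{2N}/3 if μ_{odd} = 0) such that for all i ∈ ℕ and all X, Y ∈ {D,U}: a·ν(i,X) ≤ p(i,X|Y) ≤ ν(i,X). -/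

import Mathlib

/-!
Reading off the four formulas, `p(i, X | Y) = α_Y x_X + β_Y y_X` and `ν(i, X) = x_X + y_X`,
where `x_X, y_X ≥ 0` depend only on `i` and the target state, and the weights
`(α_D, β_D) = (μ_odd + μ₀, μ_2N)`, `(α_U, β_U) = (μ_2Z, μ_odd)` lie in `[0, 1]`, since
`μ_2Z + μ_odd = 1` and `μ_2Z = μ₀ + μ_2N`. So the upper bound is immediate, and the lower
bound holds with any `a` below all four weights, e.g. `min(μ_2N, μ_odd)`.

If `μ_odd = 0` the weight `β_U` vanishes, but then all odd atoms vanish, so `y_U = 0` and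
`μ̄_{2i+1} = μ̄_{2i+2}`, whence `y_D ≤ 2 x_D`; the loss is absorbed by taking `a = μ_2N / 3`,
using `α_U = μ_2Z ≥ μ_2N`. The remaining weight `α_D = μ₀` is at least `μ_2N` by criticality:
`1 = Σ i μ_i ≥ 2 μ_2N` while `μ₀ + μ_2N = 1`.
-/

namespace CriticalOffspring

theorem summable_of_tsum_ne_zero {f : ℕ → ℝ} (h : ∑' i, f i ≠ 0) : Summable f := by
  by_contra hf
  exact h (tsum_eq_zero_of_not_summable hf)

theorem mul_add_mul_le_add {α β x y : ℝ} (hx : 0 ≤ x) (hy : 0 ≤ y) (hα : α ≤ 1) (hβ : β ≤ 1) :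
    α * x + β * y ≤ x + y := by
  nlinarith

theorem mul_add_le_mul_add_mul {a α β x y : ℝ} (hx : 0 ≤ x) (hy : 0 ≤ y) (hα : a ≤ α)
    (hβ : a ≤ β) : a * (x + y) ≤ α * x + β * y := by
  nlinarith

theorem mul_add_le_mul_add_mul_of_le_two_mul {a α β x y : ℝ} (ha : 0 ≤ a) (hβ : 0 ≤ β)
    (hy : 0 ≤ y) (hyx : y ≤ 2 * x) (hα : 3 * a ≤ α) : a * (x + y) ≤ α * x + β * y := by
  nlinarith [mul_le_mul_of_nonneg_left hyx ha, mul_nonneg hβ hy]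

noncomputable section

variable (μ : ℕ → ℝ)

def tailMass (k : ℕ) : ℝ := ∑' i, μ (k + i)

def evenMass : ℝ := ∑' i, μ (2 * i)

def posEvenMass : ℝ := ∑' i, μ (2 * (i + 1))

def oddMass : ℝ := ∑' i, μ (2 * i + 1)

def weightFst (Y : Bool) : ℝ := bif Y then oddMass μ + μ 0 else evenMass μ

def weightSnd (Y : Bool) : ℝ := bif Y then posEvenMass μ else oddMass μ

def partFst (i : ℕ) (X : Bool) : ℝ :=
  bif X then tailMass μ (2 * i + 1) + tailMass μ (2 * i + 1) * (if 1 ≤ i then 1 else 0)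
  else μ (2 * i) * (if 1 ≤ i then 1 else 0)

def partSnd (i : ℕ) (X : Bool) : ℝ := bif X then 2 * tailMass μ (2 * i + 2) else μ (2 * i + 1)

/-- `p(i, X | Y)`; the state `D` is `true` and `U` is `false`. -/
def twoStepProb (i : ℕ) (X Y : Bool) : ℝ :=
  weightFst μ Y * partFst μ i X + weightSnd μ Y * partSnd μ i X

/-- `ν(i, X)`. -/
def refMass (i : ℕ) (X : Bool) : ℝ := partFst μ i X + partSnd μ i X

end

variable {μ : ℕ → ℝ}

section Nonneg

variable (hnn : ∀ i, 0 ≤ μ i)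
include hnn

theorem tailMass_nonneg (k : ℕ) : 0 ≤ tailMass μ k := tsum_nonneg fun _ => hnn _

theorem posEvenMass_nonneg : 0 ≤ posEvenMass μ := tsum_nonneg fun _ => hnn _

theorem oddMass_nonneg : 0 ≤ oddMass μ := tsum_nonneg fun _ => hnn _

theorem partFst_nonneg (i : ℕ) (X : Bool) : 0 ≤ partFst μ i X := by
  have hind : (0 : ℝ) ≤ if 1 ≤ i then 1 else 0 := by split_ifs <;> norm_num
  cases X
  · exact mul_nonneg (hnn _) hind
  · exact add_nonneg (tailMass_nonneg hnn _) (mul_nonneg (tailMass_nonneg hnn _) hind)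

theorem partSnd_nonneg (i : ℕ) (X : Bool) : 0 ≤ partSnd μ i X := by
  cases X
  · exact hnn _
  · exact mul_nonneg zero_le_two (tailMass_nonneg hnn _)

theorem odd_eq_zero_of_oddMass_eq_zero (hS : Summable μ) (hodd : oddMass μ = 0) (k : ℕ) :
    μ (2 * k + 1) = 0 := by
  have hsum : HasSum (fun k => μ (2 * k + 1)) 0 :=
    hodd ▸ (hS.comp_injective fun a b h => by omega).hasSum
  exact congrFun ((hasSum_zero_iff_of_nonneg fun _ => hnn _).mp hsum) k

theorem two_mul_posEvenMass_le (hS : Summable μ) (hmean : Summable fun i : ℕ => (i : ℝ) * μ i) :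
    2 * posEvenMass μ ≤ ∑' i : ℕ, (i : ℝ) * μ i := by
  have hinj : Function.Injective fun k : ℕ => 2 * (k + 1) := fun a b h => by simp at h; omega
  calc 2 * posEvenMass μ = ∑' k : ℕ, 2 * μ (2 * (k + 1)) := (tsum_mul_left).symm
    _ ≤ ∑' k : ℕ, ((2 * (k + 1) : ℕ) : ℝ) * μ (2 * (k + 1)) := by
        refine Summable.tsum_le_tsum (fun k => ?_) ((hS.comp_injective hinj).mul_left 2)
          (hmean.comp_injective hinj)
        gcongr
        · exact hnn _
        · push_cast; linarith [k.cast_nonneg (α := ℝ)]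
    _ ≤ ∑' i : ℕ, (i : ℝ) * μ i :=
        tsum_comp_le_tsum_of_inj hmean (fun i => mul_nonneg i.cast_nonneg (hnn i)) hinj

end Nonneg

section Summable

variable (hS : Summable μ)
include hS

theorem evenMass_add_oddMass : evenMass μ + oddMass μ = ∑' i, μ i :=
  tsum_even_add_odd (hS.comp_injective fun a b h => by omega)
    (hS.comp_injective fun a b h => by omega)

theorem evenMass_eq_add_posEvenMass : evenMass μ = μ 0 + posEvenMass μ := by
  simpa [evenMass, posEvenMass] using
    (hS.comp_injective fun a b h => by omega : Summable fun i => μ (2 * i)).tsum_eq_zero_add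

theorem tailMass_eq_add (k : ℕ) : tailMass μ k = μ k + tailMass μ (k + 1) := by
  have h := (hS.comp_injective fun a b h => by omega : Summable fun i => μ (k + i)).tsum_eq_zero_add
  simpa [tailMass, add_assoc, add_comm 1] using h

theorem partSnd_le_two_mul_partFst (hnn : ∀ i, 0 ≤ μ i) (hodd : oddMass μ = 0) (i : ℕ)
    (X : Bool) : partSnd μ i X ≤ 2 * partFst μ i X := by
  have hoddμ := odd_eq_zero_of_oddMass_eq_zero hnn hS hodd i
  cases X
  · simp only [partSnd, cond_false, hoddμ]
    linarith [partFst_nonneg hnn i false]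
  · have htail := tailMass_eq_add hS (2 * i + 1)
    rw [hoddμ, zero_add] at htail
    simp only [partFst, partSnd, cond_true, ← htail]
    split_ifs <;> linarith [tailMass_nonneg hnn (2 * i + 1)]

end Summable

section Bounds

variable (hnn : ∀ i, 0 ≤ μ i) (hS : Summable μ) (hsum : ∑' i, μ i = 1)
include hnn hS hsum

theorem twoStepProb_bounds_of_oddMass_pos (hodd : 0 < oddMass μ) (i : ℕ) (X Y : Bool) :
    min (posEvenMass μ) (oddMass μ) * refMass μ i X ≤ twoStepProb μ i X Y ∧
      twoStepProb μ i X Y ≤ refMass μ i X := by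
  have hparity := evenMass_add_oddMass hS
  have hsplit := evenMass_eq_add_posEvenMass hS
  have hN := posEvenMass_nonneg hnn
  have h₀ := hnn 0
  have hleN := min_le_left (posEvenMass μ) (oddMass μ)
  have hleO := min_le_right (posEvenMass μ) (oddMass μ)
  have hx := partFst_nonneg hnn i X
  have hy := partSnd_nonneg hnn i X
  refine ⟨mul_add_le_mul_add_mul hx hy ?_ ?_, mul_add_mul_le_add hx hy ?_ ?_⟩ <;>
    cases Y <;> simp only [weightFst, weightSnd, cond_true, cond_false] <;> linarith

theorem twoStepProb_bounds_of_oddMass_eq_zero (hmean : ∑' i : ℕ, (i : ℝ) * μ i = 1)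
    (hodd : oddMass μ = 0) (i : ℕ) (X Y : Bool) :
    posEvenMass μ / 3 * refMass μ i X ≤ twoStepProb μ i X Y ∧
      twoStepProb μ i X Y ≤ refMass μ i X := by
  have hparity := evenMass_add_oddMass hS
  have hsplit := evenMass_eq_add_posEvenMass hS
  have hN := posEvenMass_nonneg hnn
  have hcrit : 2 * posEvenMass μ ≤ 1 :=
    hmean ▸ two_mul_posEvenMass_le hnn hS (summable_of_tsum_ne_zero (by simp [hmean]))
  have hx := partFst_nonneg hnn i X
  have hy := partSnd_nonneg hnn i X
  cases Y
  · refine ⟨mul_add_le_mul_add_mul_of_le_two_mul (by positivity) (oddMass_nonneg hnn) hy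
      (partSnd_le_two_mul_partFst hS hnn hodd i X) ?_, mul_add_mul_le_add hx hy ?_ ?_⟩ <;>
      simp only [weightFst, weightSnd, cond_false] <;> linarith
  · refine ⟨mul_add_le_mul_add_mul hx hy ?_ ?_, mul_add_mul_le_add hx hy ?_ ?_⟩ <;>
      simp only [weightFst, weightSnd, cond_true] <;> linarith

end Bounds

end CriticalOffspring

open CriticalOffspring in
theorem stmt_7 (μ : ℕ → ℝ) (hnn : ∀ i, 0 ≤ μ i)
    (hsum : ∑' i : ℕ, μ i = 1) (hmean : ∑' i : ℕ, (i : ℝ) * μ i = 1)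
    (hm2N : 0 < ∑' i : ℕ, μ (2 * (i + 1))) :
    let mubar : ℕ → ℝ := fun k => ∑' i : ℕ, μ (k + i)
    let m2Z : ℝ := ∑' i : ℕ, μ (2 * i)
    let m2N : ℝ := ∑' i : ℕ, μ (2 * (i + 1))
    let modd : ℝ := ∑' i : ℕ, μ (2 * i + 1)
    let ind : ℕ → ℝ := fun i => if 1 ≤ i then 1 else 0
    let p : ℕ → Bool → Bool → ℝ := fun i X Y =>
      match X, Y with
      | true, true => (modd + μ 0) * (mubar (2 * i + 1) + mubar (2 * i + 1) * ind i)
          + 2 * m2N * mubar (2 * i + 2)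
      | false, true => (modd + μ 0) * μ (2 * i) * ind i + m2N * μ (2 * i + 1)
      | true, false => m2Z * (mubar (2 * i + 1) + mubar (2 * i + 1) * ind i)
          + 2 * modd * mubar (2 * i + 2)
      | false, false => m2Z * μ (2 * i) * ind i + modd * μ (2 * i + 1)
    let ν : ℕ → Bool → ℝ := fun i X =>
      match X with
      | true => mubar (2 * i + 1) + mubar (2 * i + 1) * ind i + 2 * mubar (2 * i + 2)
      | false => μ (2 * i) * ind i + μ (2 * i + 1)
    ∃ a : ℝ, 0 < a ∧ a = (if 0 < modd then min m2N modd else m2N / 3) ∧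
      ∀ (i : ℕ) (X Y : Bool), a * ν i X ≤ p i X Y ∧ p i X Y ≤ ν i X := by
  intro mubar m2Z m2N modd ind p ν
  have hS : Summable μ := summable_of_tsum_ne_zero (by simp [hsum])
  refine ⟨_, ?_, rfl, fun i X Y => ?_⟩
  · split_ifs with hodd
    · exact lt_min hm2N hodd
    · positivity
  have hp : p i X Y = twoStepProb μ i X Y := by
    cases X <;> cases Y <;>
      simp only [p, twoStepProb, weightFst, weightSnd, partFst, partSnd, cond_true, cond_false,
        modd, m2N, m2Z, mubar, ind, oddMass, posEvenMass, evenMass, tailMass] <;>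
      ring
  have hν : ν i X = refMass μ i X := by
    cases X <;> rfl
  rw [hp, hν]
  split_ifs with hodd
  · exact twoStepProb_bounds_of_oddMass_pos hnn hS hsum hodd i X Y
  · exact twoStepProb_bounds_of_oddMass_eq_zero hnn hS hsum hmean
      (le_antisymm (not_lt.mp hodd) (oddMass_nonneg hnn)) i X Y
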